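/- Let N ≥ 1 and let H_N be the N×N Bessel Hessenberg matrix. Then the characteristic polynomial p_N(λ) = det(λI − H_N) satisfies, for every complex number λ, 2^{N−1} p_N(λ) = (−i)^N T_N(i λ), where T_N is the N-th Chebyshev polynomial of the first kind. Equivalently, for every ℓ with 0 ≤ ℓ ≤ N, the coefficient of λ^ℓ in 2^{N−1} p_N(λ) equals the absolute value |T_{N,ℓ}| of the coefficient of x^ℓ in T_N(x). -/

import Mathlib

/-!
Expanding `det (X - H_N)` along its last row gives the three-term recurrence
`p (n + 2) = X * p (n + 1) + c n * p n`, where `c n` is minus the product of the two off-diagonal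
entries at the bottom right: `c 0 = 1/2` because of the entry `-1` in position `(1, 2)`, and
`c n = 1/4` afterwards. Hence `q N = 2 ^ (N - 1) * p N` satisfies `q (n + 2) = 2 X q (n + 1) + q n`
with `q 0 = 1`, `q 1 = X`, which is the Chebyshev recurrence `T (n + 2) = 2 x T (n + 1) - T n`
transported by `x = i X` and rescaled by `(-i) ^ n`. So `q N = (-i) ^ N T_N (i X)`: its
coefficients are those of `T_N` times the unimodular factors `(-i) ^ N i ^ l`, and they are
nonnegative by the recurrence.
-/

/-- The Bessel Hessenberg matrix: `(H_N)_{1,2} = -1`, subdiagonal entries `1/2`,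
superdiagonal entries `-1/2` (for rows `2 ≤ i ≤ N`), all indices here 1-based. -/
noncomputable def besselH (N : ℕ) : Matrix (Fin N) (Fin N) ℝ := fun i j =>
  if (i : ℕ) = 0 ∧ (j : ℕ) = 1 then -1
  else if (j : ℕ) + 1 = (i : ℕ) then 1/2
  else if (i : ℕ) + 1 = (j : ℕ) ∧ 1 ≤ (i : ℕ) then -(1/2)
  else 0

open Polynomial Matrix

theorem Matrix.det_succ_succ_of_tridiagonal {R : Type*} [CommRing R] {n : ℕ}
    (A : Matrix (Fin (n + 2)) (Fin (n + 2)) R)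
    (hrow : ∀ k : Fin n, A (Fin.last _) k.castSucc.castSucc = 0)
    (hcol : ∀ k : Fin n, A k.castSucc.castSucc (Fin.last _) = 0) :
    A.det = A (Fin.last _) (Fin.last _) * (A.submatrix Fin.castSucc Fin.castSucc).det
      - A (Fin.last _) (Fin.last n).castSucc * A (Fin.last n).castSucc (Fin.last _) *
        ((A.submatrix Fin.castSucc Fin.castSucc).submatrix Fin.castSucc Fin.castSucc).det := by
  have hminor : (A.submatrix Fin.castSucc (Fin.last n).castSucc.succAbove).det =
      A (Fin.last n).castSucc (Fin.last _) *
        ((A.submatrix Fin.castSucc Fin.castSucc).submatrix Fin.castSucc Fin.castSucc).det := by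
    rw [det_succ_column _ (Fin.last n), Fin.sum_univ_castSucc]
    simp only [submatrix_apply, Fin.succAbove_castSucc_self, Fin.succ_last, hcol, mul_zero,
      zero_mul, Finset.sum_const_zero, zero_add, Fin.succAbove_last, Fin.val_last,
      submatrix_submatrix]
    rw [show (Fin.last n).castSucc.succAbove ∘ Fin.castSucc = Fin.castSucc ∘ Fin.castSucc from
      funext fun k => Fin.succAbove_castSucc_of_lt _ _ (Fin.castSucc_lt_last k),
      Even.neg_one_pow ⟨n, rfl⟩, one_mul]
  rw [det_succ_row _ (Fin.last _), Fin.sum_univ_castSucc, Fin.sum_univ_castSucc]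
  simp only [hrow, mul_zero, zero_mul, Finset.sum_const_zero, zero_add, Fin.succAbove_last,
    hminor, Fin.val_last, Fin.val_castSucc]
  rw [Even.neg_one_pow ⟨n + 1, rfl⟩, Odd.neg_one_pow ⟨n, by ring⟩]
  ring

theorem Matrix.charmatrix_submatrix {R m n : Type*} [CommRing R] [DecidableEq m] [DecidableEq n]
    [Fintype m] [Fintype n] (M : Matrix n n R) {e : m → n} (he : Function.Injective e) :
    (charmatrix M).submatrix e e = charmatrix (M.submatrix e e) := by
  ext i j
  by_cases h : i = j <;> simp [he.eq_iff, h]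

theorem Matrix.charpoly_succ_succ_of_tridiagonal {R : Type*} [CommRing R] {n : ℕ}
    (M : Matrix (Fin (n + 2)) (Fin (n + 2)) R)
    (hrow : ∀ k : Fin n, M (Fin.last _) k.castSucc.castSucc = 0)
    (hcol : ∀ k : Fin n, M k.castSucc.castSucc (Fin.last _) = 0) :
    M.charpoly = (X - C (M (Fin.last _) (Fin.last _))) *
        (M.submatrix Fin.castSucc Fin.castSucc).charpoly
      - C (M (Fin.last _) (Fin.last n).castSucc * M (Fin.last n).castSucc (Fin.last _)) *
        ((M.submatrix Fin.castSucc Fin.castSucc).submatrix Fin.castSucc Fin.castSucc).charpoly := by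
  have hne : Fin.last (n + 1) ≠ (Fin.last n).castSucc := (Fin.castSucc_lt_last _).ne'
  simp only [charpoly]
  rw [det_succ_succ_of_tridiagonal, charmatrix_submatrix _ (Fin.castSucc_injective _),
    charmatrix_submatrix _ (Fin.castSucc_injective _), charmatrix_apply_eq,
    charmatrix_apply_ne _ _ _ hne, charmatrix_apply_ne _ _ _ hne.symm, map_mul]
  · rw [neg_mul_neg]
  · intro k
    rw [charmatrix_apply_ne _ _ _ (Fin.castSucc_lt_last _).ne', hrow, map_zero, neg_zero]
  · intro k
    rw [charmatrix_apply_ne _ _ _ (Fin.castSucc_lt_last _).ne, hcol, map_zero, neg_zero]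

theorem besselH_submatrix_castSucc (n : ℕ) :
    (besselH (n + 1)).submatrix Fin.castSucc Fin.castSucc = besselH n := by
  ext i j
  simp [besselH]

theorem charpoly_besselH_succ_succ (n : ℕ) :
    (besselH (n + 2)).charpoly = X * (besselH (n + 1)).charpoly
      + C (if n = 0 then 1 / 2 else 1 / 4) * (besselH n).charpoly := by
  rw [charpoly_succ_succ_of_tridiagonal, besselH_submatrix_castSucc, besselH_submatrix_castSucc]
  · split_ifs with h
    · norm_num [besselH, h]
    · norm_num [besselH, h, Nat.one_le_iff_ne_zero]
      rw [if_neg (by omega), map_neg]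
      ring
  all_goals
    intro k
    have := k.isLt
    simp only [besselH, Fin.val_castSucc, Fin.val_last]
    split_ifs <;> grind

open Complex

-- `(-i)^n T_n(i x)`, which has real coefficients (`map_rotChebyshevT`).
noncomputable def rotChebyshevT : ℕ → ℝ[X]
  | 0 => 1
  | 1 => X
  | n + 2 => 2 * X * rotChebyshevT (n + 1) + rotChebyshevT n

theorem map_rotChebyshevT (n : ℕ) :
    (rotChebyshevT n).map (algebraMap ℝ ℂ) = C ((-I) ^ n) * (Chebyshev.T ℂ n).comp (C I * X) := by
  induction n using Nat.twoStepInduction with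
  | zero => simp [rotChebyshevT]
  | one =>
    simp only [rotChebyshevT, Polynomial.map_X, pow_one, Nat.cast_one, Chebyshev.T_one, X_comp]
    rw [← mul_assoc, ← C_mul, neg_mul, I_mul_I, neg_neg, C_1, one_mul]
  | more n ih0 ih1 =>
    have hI : (C I * C I : ℂ[X]) = -1 := by rw [← C_mul, I_mul_I, C_neg, C_1]
    have hT : Chebyshev.T ℂ ↑(n + 2) = 2 * X * Chebyshev.T ℂ ↑(n + 1) - Chebyshev.T ℂ n := by
      exact_mod_cast Chebyshev.T_add_two ℂ n
    rw [rotChebyshevT, Polynomial.map_add, Polynomial.map_mul, ih0, ih1, hT]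
    simp only [Polynomial.map_mul, Polynomial.map_ofNat, Polynomial.map_X, sub_comp, mul_comp,
      ofNat_comp, X_comp, pow_succ, C_mul, C_neg, Nat.cast_add, Nat.cast_one]
    linear_combination (C ((-I) ^ n) * (Chebyshev.T ℂ n).comp (C I * X)
      - 2 * X * C ((-I) ^ n) * C I * (Chebyshev.T ℂ (n + 1)).comp (C I * X)) * hI

theorem aeval_rotChebyshevT (n : ℕ) (z : ℂ) :
    aeval z (rotChebyshevT n) = (-I) ^ n * (Chebyshev.T ℂ n).eval (I * z) := by
  rw [← eval_map_algebraMap, map_rotChebyshevT, eval_mul, eval_C, eval_comp, eval_mul, eval_C,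
    eval_X]

theorem coeff_rotChebyshevT_nonneg (n l : ℕ) : 0 ≤ (rotChebyshevT n).coeff l := by
  induction n using Nat.twoStepInduction generalizing l with
  | zero => rcases l with _ | l <;> simp [rotChebyshevT, coeff_one]
  | one => rcases l with _ | _ | l <;> simp [rotChebyshevT, coeff_X]
  | more n ih0 ih1 =>
    rw [rotChebyshevT, coeff_add, mul_assoc, coeff_ofNat_mul]
    rcases l with _ | l
    · simpa using ih0 0
    · rw [coeff_X_mul]
      have := ih1 l
      have := ih0 (l + 1)
      positivity

theorem coeff_rotChebyshevT (n l : ℕ) :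
    (rotChebyshevT n).coeff l = |(Chebyshev.T ℝ n).coeff l| := by
  have h := congrArg (fun p : ℂ[X] => ‖p.coeff l‖) (map_rotChebyshevT n)
  simp only [coeff_map, coeff_C_mul, comp_C_mul_X_coeff, norm_mul, norm_pow, norm_neg, norm_I,
    one_pow, one_mul, ← Chebyshev.map_T (algebraMap ℝ ℂ)] at h
  rw [← abs_of_nonneg (coeff_rotChebyshevT_nonneg n l)]
  simpa using h

-- `N - 1` truncates: at `N = 0` the factor is `1`, matching `rotChebyshevT 0 = 1`.
theorem C_two_pow_mul_charpoly_besselH (N : ℕ) :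
    C (2 ^ (N - 1) : ℝ) * (besselH N).charpoly = rotChebyshevT N := by
  induction N using Nat.twoStepInduction with
  | zero => simp [rotChebyshevT]
  | one => simp [charpoly, besselH, rotChebyshevT]
  | more n ih0 ih1 =>
    have hC2 : (C 2 : ℝ[X]) = 2 := rfl
    rw [charpoly_besselH_succ_succ, rotChebyshevT, ← ih0, ← ih1, ← hC2]
    rcases n with _ | n
    · have h : C (2 : ℝ) * C (1 / 2) = 1 := by rw [← C_mul]; norm_num
      simp only [if_pos, zero_add, Nat.sub_self, Nat.add_one_sub_one, zero_tsub, pow_zero, pow_one,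
        C_1, one_mul]
      linear_combination (besselH 0).charpoly * h
    · have h2 : C ((2 : ℝ) ^ (n + 2)) = C 2 * C (2 ^ (n + 1)) := by rw [← C_mul, pow_succ']
      have h4 : C ((2 : ℝ) ^ (n + 2)) * C (1 / 4) = C (2 ^ n) := by
        rw [← C_mul]; ring_nf
      rw [if_neg n.succ_ne_zero]
      simp only [Nat.add_one_sub_one, show n + 1 + 2 - 1 = n + 2 from rfl]
      linear_combination X * (besselH (n + 2)).charpoly * h2 + (besselH (n + 1)).charpoly * h4

theorem charpoly_besselH_eq_chebyshev_general (N : ℕ) :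
    (∀ l : ℂ, (2 : ℂ) ^ (N - 1) * Polynomial.aeval l ((besselH N).charpoly) =
      (-Complex.I) ^ N * Polynomial.eval (Complex.I * l) (Polynomial.Chebyshev.T ℂ (N : ℤ))) ∧
    (∀ l : ℕ, l ≤ N →
      (Polynomial.C ((2 : ℝ) ^ (N - 1)) * (besselH N).charpoly).coeff l =
        |(Polynomial.Chebyshev.T ℝ (N : ℤ)).coeff l|) := by
  have h := C_two_pow_mul_charpoly_besselH N
  refine ⟨fun z => ?_, fun l _ => by rw [h, coeff_rotChebyshevT]⟩
  rw [← aeval_rotChebyshevT, ← h, map_mul, aeval_C, map_pow, map_ofNat]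

/-- The characteristic polynomial `p_N(λ) = det(λI - H_N)` of the Bessel Hessenberg matrix
satisfies `2^(N-1) p_N(λ) = (-i)^N T_N(iλ)` for every complex `λ`, where `T_N` is the `N`-th
Chebyshev polynomial of the first kind; equivalently, for `0 ≤ ℓ ≤ N`, the coefficient of
`λ^ℓ` in `2^(N-1) p_N(λ)` equals the absolute value of the coefficient of `x^ℓ` in `T_N`. -/
theorem charpoly_besselH_eq_chebyshev (N : ℕ) (hN : 1 ≤ N) :
    (∀ l : ℂ, (2 : ℂ) ^ (N - 1) * Polynomial.aeval l ((besselH N).charpoly) =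
      (-Complex.I) ^ N * Polynomial.eval (Complex.I * l) (Polynomial.Chebyshev.T ℂ (N : ℤ))) ∧
    (∀ l : ℕ, l ≤ N →
      (Polynomial.C ((2 : ℝ) ^ (N - 1)) * (besselH N).charpoly).coeff l =
        |(Polynomial.Chebyshev.T ℝ (N : ℤ)).coeff l|) :=
  charpoly_besselH_eq_chebyshev_general N
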